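/- arXiv:math/9807024 — 2 statements merged into one kernel-verified Lean document; each statement's English description precedes it below -/
import Mathlib

section
/- The RP integral extends the Lebesgue integral: Let E be a finite-dimensional real normed vector space and let f : [0,1]^n → E be Lebesgue (Bochner) integrable with respect to Lebesgue measure on [0,1]^n. Then the Lebesgue integral ∫_{[0,1]^n} f is the RP integral of f over [0,1]^n. -/
/-! An RP partition of `[0,1]^n` is a Henstock tagged partition of the half-open unit box:
the half-open cubes `(a, a + w]` are pairwise disjoint because the closed cubes have disjoint
interiors, and they still cover `(0,1]^n` because finitely many closed cubes cover `[0,1]^n`.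
A `δ`-fine RP partition is subordinate to the gauge `δ` (in the sup metric a cube of side `w`
lies in the closed ball of radius `w` around any of its points), and its Riemann sum is the
box-integral sum. So the theorem is Mathlib's `IntegrableOn.hasBoxIntegral`: a Bochner integrable
function is Henstock–Kurzweil integrable with the same integral. -/

open MeasureTheory

noncomputable section

/-- The closed axis-parallel cube with corner `a` and side length `w`. -/
def cube {n : ℕ} (a : Fin n → ℝ) (w : ℝ) : Set (Fin n → ℝ) :=
  Set.Icc a (fun i => a i + w)

/-- A tagged RP partition of `[0,1]^n` into `k` closed axis-parallel cubes
`cube (a j) (w j)` with tags `t j`: the cubes are nondegenerate, have pairwise disjoint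
interiors and union `[0,1]^n`, and `t j ∈ cube (a j) (w j)`. -/
def IsRPPartition {n : ℕ} (k : ℕ) (a : Fin k → Fin n → ℝ) (w : Fin k → ℝ)
    (t : Fin k → Fin n → ℝ) : Prop :=
  (∀ j, 0 < w j) ∧ (∀ j, t j ∈ cube (a j) (w j)) ∧
    (∀ j j', j ≠ j' →
      interior (cube (a j) (w j)) ∩ interior (cube (a j') (w j')) = ∅) ∧
    (⋃ j, cube (a j) (w j)) = Set.Icc 0 1

/-- `I` is the RP integral of `f` over `[0,1]^n`: for every `ε > 0` there is a gauge `δ`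
(positive on `[0,1]^n`) such that every `δ`-fine tagged RP partition (`diam (c j) = w j ≤ δ (t j)`)
has Riemann sum (`vol (c j) = (w j)^n`) within `ε` of `I`. -/
def HasRPIntegral {n : ℕ} {E : Type*} [NormedAddCommGroup E] [NormedSpace ℝ E]
    (f : (Fin n → ℝ) → E) (I : E) : Prop :=
  ∀ ε > (0 : ℝ), ∃ δ : (Fin n → ℝ) → ℝ, (∀ x ∈ Set.Icc (0 : Fin n → ℝ) 1, 0 < δ x) ∧
    ∀ (k : ℕ) (a : Fin k → Fin n → ℝ) (w : Fin k → ℝ) (t : Fin k → Fin n → ℝ),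
      IsRPPartition k a w t → (∀ j, w j ≤ δ (t j)) →
      ‖I - ∑ j : Fin k, (w j) ^ n • f (t j)‖ ≤ ε

namespace BoxIntegral

open Set Filter Topology Function

variable {ι : Type*}

namespace Box

theorem interior_Icc [Finite ι] (I : Box ι) : interior (Box.Icc I) = Box.Ioo I := by
  rw [Box.Icc_def, ← pi_univ_Icc, interior_pi_set finite_univ]
  simp only [_root_.interior_Icc]
  rfl

theorem disjoint_coe_of_disjoint_Ioo {I J : Box ι} (h : Disjoint (Box.Ioo I) (Box.Ioo J)) :
    Disjoint (I : Set (ι → ℝ)) J := by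
  rw [disjoint_iff_inter_eq_empty] at h ⊢
  change (pi univ _ ∩ pi univ _) = ∅ at h
  rw [coe_eq_pi, coe_eq_pi, ← pi_inter_distrib, univ_pi_eq_empty_iff]
  rw [← pi_inter_distrib, univ_pi_eq_empty_iff] at h
  simpa only [Ioo_inter_Ioo, Ioc_inter_Ioc, Ioo_eq_empty_iff, Ioc_eq_empty_iff] using h

theorem coe_subset_iUnion_of_Icc_subset [Finite ι] {κ : Type*} [Finite κ] {I : Box ι}
    {J : κ → Box ι} (h : Box.Icc I ⊆ ⋃ j, Box.Icc (J j)) : (I : Set (ι → ℝ)) ⊆ ⋃ j, J j := by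
  intro x hx
  rw [mem_coe, mem_def] at hx
  -- `x - s` lies in `Box.Icc I` for small `s > 0`, hence frequently in a single closed `J j`,
  -- which is closed and so contains `x`, while `(J j).lower ≤ x - s < x`.
  set p : ℝ → ι → ℝ := fun s i => x i - s
  have hp : Tendsto p (𝓝[>] 0) (𝓝 x) := by
    have hc : Continuous p := continuous_pi fun _ => continuous_const.sub continuous_id
    exact (hc.tendsto' 0 x (by simp [p])).mono_left nhdsWithin_le_nhds
  have hpI : ∀ᶠ s in 𝓝[>] 0, p s ∈ Box.Icc I := by
    filter_upwards [eventually_all.2 fun i => Ioo_mem_nhdsGT (sub_pos.2 (hx i).1)] with s hs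
    exact ⟨fun i => by simp only [p]; linarith [(hs i).2],
      fun i => by simp only [p]; linarith [(hs i).1, (hx i).2]⟩
  obtain ⟨j, hj⟩ : ∃ j, ∃ᶠ s in 𝓝[>] 0, p s ∈ Box.Icc (J j) :=
    frequently_exists.1 (hpI.mono fun s hs => mem_iUnion.1 (h hs)).frequently
  obtain ⟨s, hs, hs0⟩ := (hj.and_eventually self_mem_nhdsWithin).exists
  have hxJ : x ∈ Box.Icc (J j) := isClosed_Icc.mem_of_frequently_of_tendsto hj hp
  refine mem_iUnion.2 ⟨j, fun i => ⟨?_, (hxJ.2 i)⟩⟩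
  have := hs.1 i
  simp only [p] at this
  linarith [hs0]

end Box

section Family

variable {κ : Type*} {I : Box ι} {J : κ → Box ι} {t : κ → ι → ℝ}

theorem injective_of_pairwise_disjoint_coe
    (hdisj : Pairwise (Disjoint on fun j => (J j : Set (ι → ℝ)))) : Function.Injective J := by
  intro j j' hjj'
  by_contra hne
  have hself := hdisj hne
  simp only [Function.onFun, hjj', disjoint_self, bot_eq_empty] at hself
  exact (J j').nonempty_coe.ne_empty hself

variable [Fintype κ]

/-- Boxes outside the range of `J` get the junk tag `I.upper`. -/
def TaggedPrepartition.ofFamily (J : κ → Box ι) (t : κ → ι → ℝ) (hle : ∀ j, J j ≤ I)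
    (hdisj : Pairwise (Disjoint on fun j => (J j : Set (ι → ℝ))))
    (ht : ∀ j, t j ∈ Box.Icc (J j)) : TaggedPrepartition I where
  boxes := Finset.univ.map ⟨J, injective_of_pairwise_disjoint_coe hdisj⟩
  le_of_mem' := by
    simp only [Finset.mem_map, Finset.mem_univ, true_and, Function.Embedding.coeFn_mk]
    rintro _ ⟨j, rfl⟩
    exact hle j
  pairwiseDisjoint := by
    simp only [Finset.coe_map, Finset.coe_univ, image_univ, Function.Embedding.coeFn_mk]
    rintro _ ⟨j, rfl⟩ _ ⟨j', rfl⟩ hne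
    exact hdisj fun h => hne (congrArg J h)
  tag := Function.extend J t fun _ => I.upper
  tag_mem_Icc B := by
    by_cases hB : ∃ j, J j = B
    · obtain ⟨j, rfl⟩ := hB
      rw [(injective_of_pairwise_disjoint_coe hdisj).extend_apply]
      exact Box.le_iff_Icc.1 (hle j) (ht j)
    · rw [Function.extend_apply' _ _ _ hB]
      exact I.upper_mem_Icc

namespace TaggedPrepartition

variable {hle : ∀ j, J j ≤ I} {hdisj : Pairwise (Disjoint on fun j => (J j : Set (ι → ℝ)))}
  {ht : ∀ j, t j ∈ Box.Icc (J j)}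

theorem ofFamily_tag (j : κ) : (ofFamily J t hle hdisj ht).tag (J j) = t j :=
  (injective_of_pairwise_disjoint_coe hdisj).extend_apply t (fun _ => I.upper) j

theorem mem_ofFamily {B : Box ι} : B ∈ ofFamily J t hle hdisj ht ↔ ∃ j, J j = B := by
  simp [ofFamily, TaggedPrepartition.mem_mk, Prepartition.mem_mk]

theorem isPartition_ofFamily (hcover : (I : Set (ι → ℝ)) ⊆ ⋃ j, J j) :
    (ofFamily J t hle hdisj ht).IsPartition := fun x hx => by
  obtain ⟨j, hj⟩ := Set.mem_iUnion.1 (hcover hx)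
  exact ⟨J j, mem_ofFamily.2 ⟨j, rfl⟩, hj⟩

theorem isHenstock_ofFamily : (ofFamily J t hle hdisj ht).IsHenstock := by
  rintro _ hB
  obtain ⟨j, rfl⟩ := mem_ofFamily.1 hB
  rw [ofFamily_tag]
  exact ht j

theorem isSubordinate_ofFamily [Fintype ι] {r : (ι → ℝ) → Ioi (0 : ℝ)}
    (hr : ∀ j, Box.Icc (J j) ⊆ Metric.closedBall (t j) (r (t j))) :
    (ofFamily J t hle hdisj ht).IsSubordinate r := by
  rintro _ hB
  obtain ⟨j, rfl⟩ := mem_ofFamily.1 hB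
  rw [ofFamily_tag]
  exact hr j

theorem integralSum_ofFamily {E F : Type*} [NormedAddCommGroup E] [NormedSpace ℝ E]
    [NormedAddCommGroup F] [NormedSpace ℝ F] (f : (ι → ℝ) → E) (vol : ι →ᵇᵃ E →L[ℝ] F) :
    integralSum f vol (ofFamily J t hle hdisj ht) = ∑ j, vol (J j) (f (t j)) := by
  simp only [integralSum]
  exact (Finset.sum_map _ _ _).trans (Finset.sum_congr rfl fun j _ => by
    simp only [Function.Embedding.coeFn_mk, ofFamily_tag])

end TaggedPrepartition

end Family

theorem HasIntegral.exists_gauge_henstock [Fintype ι] {E F : Type*} [NormedAddCommGroup E]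
    [NormedSpace ℝ E] [NormedAddCommGroup F] [NormedSpace ℝ F] {I : Box ι} {f : (ι → ℝ) → E}
    {vol : ι →ᵇᵃ E →L[ℝ] F} {y : F} (h : HasIntegral I IntegrationParams.Henstock f vol y)
    {ε : ℝ} (hε : 0 < ε) :
    ∃ r : (ι → ℝ) → Ioi (0 : ℝ), ∀ π : TaggedPrepartition I, π.IsPartition → π.IsHenstock →
      π.IsSubordinate r → dist (integralSum f vol π) y ≤ ε := by
  obtain ⟨r, -, hr⟩ := hasIntegral_iff.1 h ε hε
  exact ⟨r 0, fun π hπ hH hsub =>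
    hr 0 π ⟨hsub, fun _ => hH, fun h => absurd h Bool.false_ne_true,
      fun h => absurd h Bool.false_ne_true⟩ hπ⟩

end BoxIntegral

open BoxIntegral Set Function

section Cubes

variable {n : ℕ}

def unitCubeBox (n : ℕ) : Box (Fin n) :=
  ⟨0, 1, fun _ => zero_lt_one⟩

def cubeBox (a : Fin n → ℝ) {w : ℝ} (hw : 0 < w) : Box (Fin n) :=
  ⟨a, fun i => a i + w, fun _ => lt_add_of_pos_right _ hw⟩

theorem Icc_unitCubeBox : Box.Icc (unitCubeBox n) = Icc 0 1 := rfl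

theorem Icc_cubeBox (a : Fin n → ℝ) {w : ℝ} (hw : 0 < w) : Box.Icc (cubeBox a hw) = cube a w :=
  rfl

theorem volume_cubeBox (a : Fin n → ℝ) {w : ℝ} (hw : 0 < w) :
    MeasureTheory.volume.toBoxAdditive (cubeBox a hw) = w ^ n := by
  rw [Box.volume_apply]
  simp [cubeBox]

theorem cube_subset_closedBall {a t : Fin n → ℝ} {w : ℝ} (hw : 0 ≤ w) (ht : t ∈ cube a w) :
    cube a w ⊆ Metric.closedBall t w := fun x hx =>
  (dist_pi_le_iff hw).2 fun i => by
    rw [Real.dist_eq, abs_sub_le_iff]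
    constructor <;> linarith [hx.1 i, hx.2 i, ht.1 i, ht.2 i]

end Cubes

namespace IsRPPartition

variable {n k : ℕ} {a : Fin k → Fin n → ℝ} {w : Fin k → ℝ} {t : Fin k → Fin n → ℝ}

theorem cube_subset_Icc (h : IsRPPartition k a w t) (j : Fin k) :
    cube (a j) (w j) ⊆ Icc 0 1 :=
  h.2.2.2 ▸ subset_iUnion (fun j => cube (a j) (w j)) j

theorem pairwise_disjoint_cubeBox (h : IsRPPartition k a w t) :
    Pairwise (Disjoint on fun j => (cubeBox (a j) (h.1 j) : Set (Fin n → ℝ))) :=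
  fun j j' hne => Box.disjoint_coe_of_disjoint_Ioo <| by
    simpa only [← Box.interior_Icc, Icc_cubeBox, disjoint_iff_inter_eq_empty] using h.2.2.1 j j' hne

def toTaggedPrepartition (h : IsRPPartition k a w t) : TaggedPrepartition (unitCubeBox n) :=
  .ofFamily (fun j => cubeBox (a j) (h.1 j)) t (fun j => Box.le_iff_Icc.2 (h.cube_subset_Icc j))
    h.pairwise_disjoint_cubeBox h.2.1

theorem isPartition_toTaggedPrepartition (h : IsRPPartition k a w t) :
    h.toTaggedPrepartition.IsPartition :=
  TaggedPrepartition.isPartition_ofFamily <| Box.coe_subset_iUnion_of_Icc_subset <| by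
    simp only [Icc_unitCubeBox, Icc_cubeBox, h.2.2.2, subset_rfl]

theorem isHenstock_toTaggedPrepartition (h : IsRPPartition k a w t) :
    h.toTaggedPrepartition.IsHenstock :=
  TaggedPrepartition.isHenstock_ofFamily

theorem isSubordinate_toTaggedPrepartition (h : IsRPPartition k a w t)
    {r : (Fin n → ℝ) → Ioi (0 : ℝ)} (hr : ∀ j, w j ≤ r (t j)) :
    h.toTaggedPrepartition.IsSubordinate r :=
  TaggedPrepartition.isSubordinate_ofFamily fun j =>
    (cube_subset_closedBall (h.1 j).le (h.2.1 j)).trans (Metric.closedBall_subset_closedBall (hr j))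

theorem integralSum_toTaggedPrepartition {E : Type*} [NormedAddCommGroup E] [NormedSpace ℝ E]
    (h : IsRPPartition k a w t) (f : (Fin n → ℝ) → E) :
    integralSum f MeasureTheory.volume.toBoxAdditive.toSMul h.toTaggedPrepartition =
      ∑ j, w j ^ n • f (t j) := by
  refine (TaggedPrepartition.integralSum_ofFamily f _).trans ?_
  simp only [BoxAdditiveMap.toSMul_apply, volume_cubeBox]

end IsRPPartition

/-- **The RP integral extends the Lebesgue integral**: if `f : [0,1]^n → E` is Lebesgue
(Bochner) integrable with respect to Lebesgue measure on `[0,1]^n`, then its Lebesgue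
integral is the RP integral of `f` over `[0,1]^n`. -/
theorem rp_extends_lebesgue
    {n : ℕ} {E : Type*} [NormedAddCommGroup E] [NormedSpace ℝ E] [FiniteDimensional ℝ E]
    (f : (Fin n → ℝ) → E) (hf : IntegrableOn f (Set.Icc 0 1) volume) :
    HasRPIntegral f (∫ x in Set.Icc (0 : Fin n → ℝ) 1, f x) := by
  have hint : ∫ x in Icc 0 1, f x = ∫ x in (unitCubeBox n : Set (Fin n → ℝ)), f x :=
    (setIntegral_congr_set (unitCubeBox n).coe_ae_eq_Icc).symm
  have hbox := (hf.mono_set (unitCubeBox n).coe_subset_Icc).hasBoxIntegral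
    IntegrationParams.Henstock rfl
  intro ε hε
  obtain ⟨r, hr⟩ := hbox.exists_gauge_henstock hε
  refine ⟨fun x => r x, fun x _ => (r x).2, fun k a w t hP hfine => ?_⟩
  have hdist := hr _ hP.isPartition_toTaggedPrepartition hP.isHenstock_toTaggedPrepartition
    (hP.isSubordinate_toTaggedPrepartition hfine)
  rwa [hP.integralSum_toTaggedPrepartition, dist_eq_norm', ← hint] at hdist

end
end

section
/- Divergence theorem on the unit cube with only Lebesgue-integrable divergence: Let F : [0,1]^n → ℝ^n be continuous on [0,1]^n and differentiable at every point of (0,1)^n, and suppose that div F = Σ_{i=1}^n ∂_i F_i is Lebesgue integrable on (0,1)^n. Then ∫_{(0,1)^n} div F(x) dx = Σ_{i=1}^n [ ∫_{s_i^+} F_i dσ − ∫_{s_i^−} F_i dσ ], where s_i^+ and s_i^− are the faces of [0,1]^n on which x_i = 1 and x_i = 0 respectively, and σ is (n−1)-dimensional Lebesgue (surface) measure on the faces. -/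
/-!
Mathlib's divergence theorem on boxes already allows a merely integrable divergence, so it
remains to match its two sides with ours: the open cube differs from `Icc 0 1` by a null set,
and each face is the image of `[0,1]^(n-1)` under `Fin.insertNth c`. That map is an isometry
for the sup metric of `Fin n → ℝ`, and for this metric `μH[n - 1]` on `Fin (n - 1) → ℝ` is
Lebesgue measure, so the surface integral over a face is the Lebesgue integral Mathlib uses.
-/

open MeasureTheory

noncomputable section

/-- The open unit cube `(0,1)^n`. -/
def openCube (n : ℕ) : Set (Fin n → ℝ) :=
  Set.pi Set.univ fun _ : Fin n => Set.Ioo (0 : ℝ) 1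

/-- The face of `[0,1]^n` on which `x i = 1` (`e = true`) resp. `x i = 0` (`e = false`). -/
def unitFace (n : ℕ) (i : Fin n) (e : Bool) : Set (Fin n → ℝ) :=
  {x ∈ Set.Icc (0 : Fin n → ℝ) 1 | x i = if e then 1 else 0}

open Set

theorem Fin.isometry_insertNth {m : ℕ} {α : Fin (m + 1) → Type*} [∀ j, PseudoMetricSpace (α j)]
    (i : Fin (m + 1)) (c : α i) :
    Isometry (i.insertNth c : (∀ j, α (i.succAbove j)) → ∀ j, α j) :=
  Isometry.of_dist_eq fun y z => by simp [Fin.dist_insertNth_insertNth]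

theorem Fin.image_insertNth_Icc {m : ℕ} {α : Fin (m + 1) → Type*} [∀ j, Preorder (α j)]
    {i : Fin (m + 1)} {a b : ∀ j, α j} {c : α i} (hc : c ∈ Icc (a i) (b i)) :
    i.insertNth c '' Icc (fun j => a (i.succAbove j)) (fun j => b (i.succAbove j)) =
      {x ∈ Icc a b | x i = c} := by
  ext x
  constructor
  · rintro ⟨y, hy, rfl⟩
    exact ⟨Fin.insertNth_mem_Icc.2 ⟨hc, hy⟩, Fin.insertNth_apply_same _ _ _⟩
  · rintro ⟨hx, rfl⟩
    rw [← Fin.insertNth_self_removeNth i x, Fin.insertNth_mem_Icc] at hx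
    exact ⟨i.removeNth x, hx.2, Fin.insertNth_self_removeNth i x⟩

theorem Isometry.setIntegral_image_hausdorffMeasure {X Y E : Type*}
    [EMetricSpace X] [MeasurableSpace X] [BorelSpace X] [CompleteSpace X]
    [EMetricSpace Y] [MeasurableSpace Y] [BorelSpace Y]
    [NormedAddCommGroup E] [NormedSpace ℝ E]
    {φ : X → Y} (hφ : Isometry φ) {d : ℝ} (hd : 0 ≤ d) (s : Set X) (g : Y → E) :
    ∫ y in φ '' s, g y ∂μH[d] = ∫ x in s, g (φ x) ∂μH[d] := by
  have hemb : MeasurableEmbedding φ := hφ.isClosedEmbedding.measurableEmbedding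
  have hrange : MeasurableSet (range φ) := hφ.isClosedEmbedding.isClosed_range.measurableSet
  rw [← hemb.injective.preimage_image s, ← hemb.setIntegral_map,
    hφ.map_hausdorffMeasure (Or.inl hd), Measure.restrict_restrict' hrange,
    inter_eq_self_of_subset_left (image_subset_range φ s), hemb.injective.preimage_image]

theorem unitFace_succ_eq_image {m : ℕ} (i : Fin (m + 1)) (e : Bool) :
    unitFace (m + 1) i e = i.insertNth (if e then (1 : ℝ) else 0) '' Icc 0 1 := by
  refine (Fin.image_insertNth_Icc ?_).symm
  cases e <;> simp

theorem setIntegral_unitFace_succ {E : Type*} [NormedAddCommGroup E] [NormedSpace ℝ E]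
    {m : ℕ} (i : Fin (m + 1)) (e : Bool) (g : (Fin (m + 1) → ℝ) → E) :
    ∫ x in unitFace (m + 1) i e, g x ∂μH[m] =
      ∫ y in Icc (0 : Fin m → ℝ) 1, g (i.insertNth (if e then 1 else 0) y) := by
  have hvol : (μH[m] : Measure (Fin m → ℝ)) = volume := by
    simpa using hausdorffMeasure_pi_real (ι := Fin m)
  rw [unitFace_succ_eq_image, (Fin.isometry_insertNth i _).setIntegral_image_hausdorffMeasure
    m.cast_nonneg, hvol]

theorem openCube_ae_eq_Icc (n : ℕ) : openCube n =ᵐ[volume] Icc (0 : Fin n → ℝ) 1 :=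
  Measure.univ_pi_Ioo_ae_eq_Icc

/-- **Divergence theorem on the unit cube with only Lebesgue-integrable divergence**:
if `F : [0,1]^n → ℝ^n` is continuous on `[0,1]^n`, differentiable at every point of
`(0,1)^n`, and `div F = ∑ i, ∂ᵢFᵢ` is Lebesgue integrable on `(0,1)^n`, then
`∫_{(0,1)^n} div F = ∑ i [∫_{sᵢ⁺} Fᵢ dσ − ∫_{sᵢ⁻} Fᵢ dσ]`, with `σ` the `(n-1)`-dimensional
(Hausdorff) surface measure on the faces. -/
theorem divergence_theorem_unit_cube
    {n : ℕ} (F : (Fin n → ℝ) → (Fin n → ℝ))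
    (hFc : ContinuousOn F (Set.Icc 0 1))
    (hFd : ∀ x ∈ openCube n, DifferentiableAt ℝ F x)
    (hInt : IntegrableOn (fun x => ∑ i : Fin n, fderiv ℝ F x (Pi.single i 1) i)
      (openCube n) volume) :
    ∫ x in openCube n, (∑ i : Fin n, fderiv ℝ F x (Pi.single i 1) i) =
      ∑ i : Fin n,
        ((∫ x in unitFace n i true, F x i ∂μH[(n - 1 : ℕ)]) -
          ∫ x in unitFace n i false, F x i ∂μH[(n - 1 : ℕ)]) := by
  cases n with
  | zero => simp
  | succ m =>
    rw [setIntegral_congr_set (openCube_ae_eq_Icc _),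
      integral_divergence_of_hasFDerivAt_off_countable 0 1 (fun _ => zero_le_one) F
        (fderiv ℝ F) ∅ countable_empty hFc (fun x hx => (hFd x hx.1).hasFDerivAt)
        (hInt.congr_set_ae (openCube_ae_eq_Icc _).symm)]
    simp only [Nat.add_sub_cancel, setIntegral_unitFace_succ]
    rfl

end
end
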